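/- arXiv:2603.15859 — 2 statements merged into one kernel-verified Lean document; each statement's English description precedes it below -/
import Mathlib

section
/- Let A ∈ 𝒜₂(k) and let 1 ≤ i < j ≤ m. Let ι_{i,j} : A₂(k)[[h]] → A_m(k)[[h]] be the algebra embedding sending x₁ ↦ x_i, p₁ ↦ p_i, x₂ ↦ x_j, p₂ ↦ p_j. Then ι_{i,j}(φ(A)) = φ(Ψ^m_{i,j}(A)), where Ψ^m_{i,j}(A) ∈ Mat_m(k[[h]]) is the matrix whose (i,i), (i,j), (j,i), (j,j) entries are A₁₁, A₁₂, A₂₁, A₂₂ respectively, whose other diagonal entries equal 1, and whose remaining entries are 0. -/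
open PowerSeries

noncomputable section

/-- Exponential of a formal power series with coefficients in a (possibly noncommutative)
ℚ-algebra; intended for series with zero constant term. -/
def psExp {B : Type*} [Ring B] [Algebra ℚ B] (a : PowerSeries B) : PowerSeries B :=
  PowerSeries.mk fun m =>
    ∑ r ∈ Finset.range (m + 1), (r.factorial : ℚ)⁻¹ • (PowerSeries.coeff (R := B) m (a ^ r))

/-- Coefficientwise extension of a map `R → S` to formal power series. -/
def liftFun {R S : Type*} [Semiring R] [Semiring S] (f : R → S) (g : PowerSeries R) :
    PowerSeries S :=
  PowerSeries.mk fun m => f (PowerSeries.coeff (R := R) m g)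

/-- The normal-ordering property of a map `N : k[x_1,…,x_n,p_1,…,p_n] → A_n(k)`. -/
def IsNormalOrdering {k : Type*} [Field k] {n : ℕ} {B : Type*} [Ring B] [Algebra k B]
    (x p : Fin n → B) (N : MvPolynomial (Fin n ⊕ Fin n) k →ₗ[k] B) : Prop :=
  ∀ d : (Fin n ⊕ Fin n) →₀ ℕ,
    N (MvPolynomial.monomial d 1) =
      ((List.finRange n).map fun i => x i ^ d (Sum.inl i)).prod *
        ((List.finRange n).map fun i => p i ^ d (Sum.inr i)).prod

/-- `A ≡ 𝟙 (mod h)`, i.e. membership of `A` in `𝒜_n(k)`. -/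
def IsOneModH {k : Type*} [CommRing k] {n : ℕ}
    (A : Matrix (Fin n) (Fin n) (PowerSeries k)) : Prop :=
  ∀ i j, PowerSeries.constantCoeff (R := k) (A i j) = if i = j then 1 else 0

/-- `φ(A) := N(exp(Σ_{i,j} x_i (A − 𝟙)_{ij} p_j))`. -/
def phiMat {k : Type*} [Field k] [CharZero k] {n : ℕ} {B : Type*} [Ring B] [Algebra k B]
    (N : MvPolynomial (Fin n ⊕ Fin n) k →ₗ[k] B)
    (A : Matrix (Fin n) (Fin n) (PowerSeries k)) : PowerSeries B :=
  liftFun N (psExp (∑ i : Fin n, ∑ j : Fin n,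
    PowerSeries.C (R := MvPolynomial (Fin n ⊕ Fin n) k)
        (MvPolynomial.X (Sum.inl i) * MvPolynomial.X (Sum.inr j)) *
      PowerSeries.map (MvPolynomial.C) ((A - 1) i j)))

/-- The block-insertion matrix `Ψ^m_{i,j}(A)`. -/
def PsiIns {k : Type*} [Field k] {m : ℕ} (i j : Fin m)
    (A : Matrix (Fin 2) (Fin 2) (PowerSeries k)) : Matrix (Fin m) (Fin m) (PowerSeries k) :=
  fun a b =>
    if a = i ∧ b = i then A 0 0
    else if a = i ∧ b = j then A 0 1
    else if a = j ∧ b = i then A 1 0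
    else if a = j ∧ b = j then A 1 1
    else if a = b then 1 else 0


/-! Write `e = ![i, j] : Fin 2 → Fin m`. Renaming the symbols along `Sum.map e e` carries the
exponent `Σ x_a (A - 𝟙)_{ab} p_b` of `φ(A)` to that of `φ(Ψ^m_{i,j}(A))`, because
`Ψ^m_{i,j}(A) - 𝟙` vanishes outside the `{i, j}`-block, and renaming commutes with the
exponential series. It remains that normal ordering intertwines renaming with `ι`: a renamed
monomial normally orders to a product over all `m` legs in which only the legs `e a` carry
nontrivial powers, and these factors can be regrouped since the `x`'s, resp. the `p`'s, commute. -/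

theorem List.prod_map_finRange_of_injective {M : Type*} [Monoid M] {n m : ℕ}
    (f : Fin m → M) (hf : ∀ a b, Commute (f a) (f b)) (e : Fin n → Fin m)
    (he : Function.Injective e) (h1 : ∀ a ∉ Set.range e, f a = 1) :
    ((List.finRange m).map f).prod = ((List.finRange n).map (f ∘ e)).prod := by
  let S := Submonoid.closure (Set.range f)
  have : IsMulCommutative S := Submonoid.isMulCommutative_closure M <| by
    rintro _ ⟨a, rfl⟩ _ ⟨b, rfl⟩; exact hf a b
  let F : Fin m → S := fun a => ⟨f a, Submonoid.subset_closure ⟨a, rfl⟩⟩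
  have hF : f = S.subtype ∘ F := rfl
  open IsMulCommutative in
  rw [hF, Function.comp_assoc, ← List.map_map, ← List.map_map, ← map_list_prod, ← map_list_prod,
    ← Fin.prod_univ_def, ← Fin.prod_univ_def,
    Fintype.prod_of_injective e he (F ∘ e) F (fun a ha => Subtype.ext (h1 a ha)) fun _ => rfl]

theorem map_list_prod_pow_of_injective {M M' : Type*} [Monoid M] [Monoid M'] {n m : ℕ}
    (f : M →* M') {y : Fin n → M} {y' : Fin m → M'} (hy' : ∀ a b, Commute (y' a) (y' b))
    {e : Fin n → Fin m} (he : Function.Injective e) (hf : ∀ a, f (y a) = y' (e a))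
    {u : Fin m → ℕ} {v : Fin n → ℕ} (huv : ∀ a, u (e a) = v a)
    (hu : ∀ a ∉ Set.range e, u a = 0) :
    ((List.finRange m).map fun a => y' a ^ u a).prod =
      f ((List.finRange n).map fun a => y a ^ v a).prod := by
  rw [List.prod_map_finRange_of_injective _ (fun a b => (hy' a b).pow_pow _ _) e he
    fun a ha => by rw [hu a ha, pow_zero], map_list_prod, List.map_map]
  congr 1
  refine List.map_congr_left fun a _ => ?_
  simp only [Function.comp_apply, map_pow, hf, huv]

theorem Finsupp.mapDomain_sumMap_inl_notMem {n m : ℕ} {e : Fin n → Fin m}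
    (d : (Fin n ⊕ Fin n) →₀ ℕ) {c : Fin m} (hc : c ∉ Set.range e) :
    d.mapDomain (Sum.map e e) (Sum.inl c) = 0 := by
  refine Finsupp.mapDomain_of_notMem_range _ _ ?_
  rintro ⟨a | a, h⟩
  · exact hc ⟨a, Sum.inl_injective h⟩
  · exact Sum.inr_ne_inl h

theorem Finsupp.mapDomain_sumMap_inr_notMem {n m : ℕ} {e : Fin n → Fin m}
    (d : (Fin n ⊕ Fin n) →₀ ℕ) {c : Fin m} (hc : c ∉ Set.range e) :
    d.mapDomain (Sum.map e e) (Sum.inr c) = 0 := by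
  refine Finsupp.mapDomain_of_notMem_range _ _ ?_
  rintro ⟨a | a, h⟩
  · exact Sum.inl_ne_inr h
  · exact hc ⟨a, Sum.inr_injective h⟩

theorem IsNormalOrdering.rename {k : Type*} [Field k] {n m : ℕ}
    {B : Type*} [Ring B] [Algebra k B] {B' : Type*} [Ring B'] [Algebra k B']
    {x p : Fin n → B} {N : MvPolynomial (Fin n ⊕ Fin n) k →ₗ[k] B} (hN : IsNormalOrdering x p N)
    {x' p' : Fin m → B'} {N' : MvPolynomial (Fin m ⊕ Fin m) k →ₗ[k] B'}
    (hN' : IsNormalOrdering x' p' N')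
    (hx' : ∀ a b, Commute (x' a) (x' b)) (hp' : ∀ a b, Commute (p' a) (p' b))
    {e : Fin n → Fin m} (he : Function.Injective e) (ι : B →+* B')
    (hιx : ∀ a, ι (x a) = x' (e a)) (hιp : ∀ a, ι (p a) = p' (e a))
    (hιalg : ∀ c : k, ι (algebraMap k B c) = algebraMap k B' c)
    (q : MvPolynomial (Fin n ⊕ Fin n) k) :
    N' (MvPolynomial.rename (Sum.map e e) q) = ι (N q) := by
  induction q using MvPolynomial.induction_on' with
  | add q r hq hr => simp only [map_add, hq, hr]
  | monomial d c =>
    have hsmul (v : B) : ι (c • v) = c • ι v := by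
      rw [Algebra.smul_def, map_mul, hιalg, ← Algebra.smul_def]
    have hd (a) : d.mapDomain (Sum.map e e) (Sum.map e e a) = d a :=
      Finsupp.mapDomain_apply (he.sumMap he) d a
    rw [MvPolynomial.rename_monomial, ← mul_one c, ← smul_eq_mul, ← MvPolynomial.smul_monomial,
      ← MvPolynomial.smul_monomial, map_smul, map_smul, hsmul, hN', hN, map_mul]
    congr 2
    · exact map_list_prod_pow_of_injective ι.toMonoidHom hx' he hιx (fun a => hd (Sum.inl a))
        fun _ => Finsupp.mapDomain_sumMap_inl_notMem d
    · exact map_list_prod_pow_of_injective ι.toMonoidHom hp' he hιp (fun a => hd (Sum.inr a))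
        fun _ => Finsupp.mapDomain_sumMap_inr_notMem d

theorem psExp_map {B C : Type*} [Ring B] [Algebra ℚ B] [Ring C] [Algebra ℚ C]
    (f : B →+* C) (a : PowerSeries B) :
    psExp (PowerSeries.map f a) = PowerSeries.map f (psExp a) := by
  ext n
  simp only [psExp, PowerSeries.coeff_mk, PowerSeries.coeff_map, map_sum]
  refine Finset.sum_congr rfl fun r _ => ?_
  rw [map_rat_smul f, ← map_pow, PowerSeries.coeff_map]

theorem liftFun_liftFun {R S T : Type*} [Semiring R] [Semiring S] [Semiring T]
    (f : S → T) (g : R → S) (s : PowerSeries R) :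
    liftFun f (liftFun g s) = liftFun (f ∘ g) s := by
  ext n
  simp [liftFun]

theorem liftFun_map {R S T : Type*} [Semiring R] [Semiring S] [Semiring T]
    (f : S → T) (g : R →+* S) (s : PowerSeries R) :
    liftFun f (PowerSeries.map g s) = liftFun (f ∘ g) s := by
  ext n
  simp [liftFun]

def weylExponent {k : Type*} [CommRing k] {n : ℕ} (A : Matrix (Fin n) (Fin n) (PowerSeries k)) :
    PowerSeries (MvPolynomial (Fin n ⊕ Fin n) k) :=
  ∑ i : Fin n, ∑ j : Fin n,
    PowerSeries.C (R := MvPolynomial (Fin n ⊕ Fin n) k)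
        (MvPolynomial.X (Sum.inl i) * MvPolynomial.X (Sum.inr j)) *
      PowerSeries.map (MvPolynomial.C) ((A - 1) i j)

theorem phiMat_eq_liftFun_psExp {k : Type*} [Field k] [CharZero k] {n : ℕ}
    {B : Type*} [Ring B] [Algebra k B] (N : MvPolynomial (Fin n ⊕ Fin n) k →ₗ[k] B)
    (A : Matrix (Fin n) (Fin n) (PowerSeries k)) :
    phiMat N A = liftFun N (psExp (weylExponent A)) := rfl

theorem weylExponent_eq_map_rename {k : Type*} [CommRing k] {n m : ℕ}
    {e : Fin n → Fin m} (he : Function.Injective e)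
    (A : Matrix (Fin n) (Fin n) (PowerSeries k)) (A' : Matrix (Fin m) (Fin m) (PowerSeries k))
    (hA' : ∀ a b, (A' - 1) (e a) (e b) = (A - 1) a b)
    (hA'_row : ∀ c ∉ Set.range e, ∀ d, (A' - 1) c d = 0)
    (hA'_col : ∀ c, ∀ d ∉ Set.range e, (A' - 1) c d = 0) :
    weylExponent A' =
      PowerSeries.map (MvPolynomial.rename (R := k) (Sum.map e e)).toRingHom (weylExponent A) := by
  have hmapC (s : PowerSeries k) :
      PowerSeries.map (MvPolynomial.rename (R := k) (Sum.map e e) :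
          MvPolynomial (Fin n ⊕ Fin n) k →+* MvPolynomial (Fin m ⊕ Fin m) k)
        (PowerSeries.map MvPolynomial.C s) = PowerSeries.map MvPolynomial.C s := by
    ext; simp [PowerSeries.coeff_map]
  simp only [weylExponent, map_sum, map_mul, PowerSeries.map_C, hmapC, AlgHom.toRingHom_eq_coe,
    RingHom.coe_coe, MvPolynomial.rename_X, Sum.map_inl, Sum.map_inr, ← hA']
  symm
  refine Fintype.sum_of_injective e he _ _ (fun c hc => ?_) fun a => ?_
  · simp [hA'_row c hc]
  · refine Fintype.sum_of_injective e he _ _ (fun d hd => ?_) fun b => rfl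
    simp [hA'_col _ d hd]

section PsiIns

variable {k : Type*} [Field k] {m : ℕ} {i j : Fin m} (A : Matrix (Fin 2) (Fin 2) (PowerSeries k))

theorem PsiIns_sub_one_apply_vecCons (hne : i ≠ j) (a b : Fin 2) :
    (PsiIns i j A - 1) (![i, j] a) (![i, j] b) = (A - 1) a b := by
  fin_cases a <;> fin_cases b <;> simp [PsiIns, hne, hne.symm]

theorem PsiIns_sub_one_apply_of_notMem_range_left {c : Fin m} (hc : c ∉ Set.range ![i, j])
    (d : Fin m) : (PsiIns i j A - 1) c d = 0 := by
  simp only [Matrix.range_cons, Matrix.range_empty, Set.union_empty, Set.mem_union,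
    Set.mem_singleton_iff, not_or] at hc
  rcases eq_or_ne c d with rfl | hcd
  · simp [PsiIns, hc.1, hc.2]
  · simp [PsiIns, hc.1, hc.2, hcd]

theorem PsiIns_sub_one_apply_of_notMem_range_right (c : Fin m) {d : Fin m}
    (hd : d ∉ Set.range ![i, j]) : (PsiIns i j A - 1) c d = 0 := by
  simp only [Matrix.range_cons, Matrix.range_empty, Set.union_empty, Set.mem_union,
    Set.mem_singleton_iff, not_or] at hd
  rcases eq_or_ne c d with rfl | hcd
  · simp [PsiIns, hd.1, hd.2]
  · simp [PsiIns, hd.1, hd.2, hcd]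

end PsiIns

theorem statement3_general {k : Type*} [Field k] [CharZero k] {m : ℕ}
    {B2 : Type*} [Ring B2] [Algebra k B2] {Bm : Type*} [Ring Bm] [Algebra k Bm]
    (x2 p2 : Fin 2 → B2)
    (xm pm : Fin m → Bm)
    (hxxm : ∀ a b, xm a * xm b = xm b * xm a)
    (hppm : ∀ a b, pm a * pm b = pm b * pm a)
    (N2 : MvPolynomial (Fin 2 ⊕ Fin 2) k →ₗ[k] B2) (hN2 : IsNormalOrdering x2 p2 N2)
    (Nm : MvPolynomial (Fin m ⊕ Fin m) k →ₗ[k] Bm) (hNm : IsNormalOrdering xm pm Nm)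
    (i j : Fin m) (hij : i < j)
    (ι : B2 →+* Bm)
    (hιx1 : ι (x2 0) = xm i) (hιp1 : ι (p2 0) = pm i)
    (hιx2 : ι (x2 1) = xm j) (hιp2 : ι (p2 1) = pm j)
    (hιalg : ∀ c : k, ι (algebraMap k B2 c) = algebraMap k Bm c)
    (A : Matrix (Fin 2) (Fin 2) (PowerSeries k)) :
    liftFun ι (phiMat N2 A) = phiMat Nm (PsiIns i j A) := by
  have he : Function.Injective ![i, j] :=
    Fin.cons_injective_iff.2 ⟨by simpa using hij.ne, Function.injective_of_subsingleton _⟩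
  have hNι : Nm ∘ MvPolynomial.rename (Sum.map ![i, j] ![i, j]) = ι ∘ N2 :=
    funext <| hN2.rename hNm hxxm hppm he ι (Fin.forall_fin_two.2 ⟨hιx1, hιx2⟩)
      (Fin.forall_fin_two.2 ⟨hιp1, hιp2⟩) hιalg
  rw [phiMat_eq_liftFun_psExp, phiMat_eq_liftFun_psExp,
    weylExponent_eq_map_rename he A _ (PsiIns_sub_one_apply_vecCons A hij.ne)
      (fun _ hc => PsiIns_sub_one_apply_of_notMem_range_left A hc)
      (fun c _ hd => PsiIns_sub_one_apply_of_notMem_range_right A c hd),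
    psExp_map, liftFun_map, liftFun_liftFun]
  exact congrArg (liftFun · _) hNι.symm

/-- for `A ∈ 𝒜₂(k)` and `1 ≤ i < j ≤ m`, the leg embedding
`ι_{i,j} : A₂(k)[[h]] → A_m(k)[[h]]` (sending `x₁ ↦ x_i, p₁ ↦ p_i, x₂ ↦ x_j, p₂ ↦ p_j`,
extended coefficientwise) satisfies `ι_{i,j}(φ(A)) = φ(Ψ^m_{i,j}(A))`. -/
theorem statement3 {k : Type*} [Field k] [CharZero k] {m : ℕ}
    {B2 : Type*} [Ring B2] [Algebra k B2] {Bm : Type*} [Ring Bm] [Algebra k Bm]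
    (x2 p2 : Fin 2 → B2)
    (hxx2 : ∀ a b, x2 a * x2 b = x2 b * x2 a)
    (hpp2 : ∀ a b, p2 a * p2 b = p2 b * p2 a)
    (hpx2 : ∀ a b, p2 a * x2 b - x2 b * p2 a = if a = b then (1 : B2) else 0)
    (xm pm : Fin m → Bm)
    (hxxm : ∀ a b, xm a * xm b = xm b * xm a)
    (hppm : ∀ a b, pm a * pm b = pm b * pm a)
    (hpxm : ∀ a b, pm a * xm b - xm b * pm a = if a = b then (1 : Bm) else 0)
    (N2 : MvPolynomial (Fin 2 ⊕ Fin 2) k →ₗ[k] B2) (hN2 : IsNormalOrdering x2 p2 N2)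
    (Nm : MvPolynomial (Fin m ⊕ Fin m) k →ₗ[k] Bm) (hNm : IsNormalOrdering xm pm Nm)
    (i j : Fin m) (hij : i < j)
    (ι : B2 →+* Bm)
    (hιx1 : ι (x2 0) = xm i) (hιp1 : ι (p2 0) = pm i)
    (hιx2 : ι (x2 1) = xm j) (hιp2 : ι (p2 1) = pm j)
    (hιalg : ∀ c : k, ι (algebraMap k B2 c) = algebraMap k Bm c)
    (A : Matrix (Fin 2) (Fin 2) (PowerSeries k)) (hA : IsOneModH A) :
    liftFun ι (phiMat N2 A) = phiMat Nm (PsiIns i j A) :=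
  statement3_general x2 p2 xm pm hxxm hppm N2 hN2 Nm hNm i j hij ι hιx1 hιp1 hιx2 hιp2 hιalg A
end
end

section
/- Define the operators on L: E := i·T₁·(multiplication by x^{−1})∘(1 + q T₂ D₋), F := i·T₁·(multiplication by x)∘(1 + q T₂ D₊), K := T₁² T₂·D₋, K' := T₁² T₂·D₊. Then: K E = q² E K, K F = q^{−2} F K, K' E = q^{−2} E K', K' F = q² F K', K K' = K' K = T₁⁴ T₂²·Id, and E F − F E = (q − q^{−1})(K − K'). In particular K K' = Id if and only if T₁² T₂ = ±1. -/
/-!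
In the monomial basis `T m` of `k[T;T⁻¹]`, the operators `K` and `K'` are diagonal with weights
`T₁² T₂ q^{∓2m}`, while `E` and `F` shift the degree by `-1` and `+1`. Every relation therefore
reduces to an identity between the weights at each `m`: moving a diagonal operator past a shift
rescales its weight by `q^{±2}`, and `EF - FE` is diagonal, with a weight that `i² = -1` turns
into `(q - q⁻¹) T₁² T₂ (q^{-2m} - q^{2m})`.
-/

namespace LaurentPolynomial

variable {R : Type*}

theorem linearMap_ext_T [CommSemiring R] {M : Type*} [AddCommMonoid M] [Module R M]
    {f g : R[T;T⁻¹] →ₗ[R] M} (h : ∀ m, f (T m) = g (T m)) : f = g := by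
  refine AddMonoidAlgebra.lhom_ext' fun m => LinearMap.ext fun r => ?_
  have hsingle : AddMonoidAlgebra.lsingle (R := R) m r = r • (T m : R[T;T⁻¹]) := by
    rw [T, AddMonoidAlgebra.lsingle_apply, AddMonoidAlgebra.smul_single, smul_eq_mul, mul_one]
  simp [hsingle, h]

variable [CommRing R]

theorem mulLeft_T_mul_one_add_smul_apply_T {D : Module.End R R[T;T⁻¹]} {δ : ℤ → R}
    (hD : ∀ m, D (T m) = δ m • T m) (a : R) (d m : ℤ) :
    (LinearMap.mulLeft R (T d : R[T;T⁻¹]) * (1 + a • D)) (T m) = (1 + a * δ m) • T (m + d) := by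
  simp only [Module.End.mul_apply, LinearMap.add_apply, LinearMap.smul_apply, Module.End.one_apply,
    LinearMap.mulLeft_apply, hD, mul_add, mul_smul_comm, ← T_add, add_smul, one_smul, smul_smul,
    add_comm d m]

variable {K K' E F : Module.End R R[T;T⁻¹]} {κ κ' e f : ℤ → R}

theorem diagonal_mul_shift_eq_smul (hK : ∀ m, K (T m) = κ m • T m) {d : ℤ}
    (hE : ∀ m, E (T m) = e m • T (m + d)) (c : R) (hc : ∀ m, κ (m + d) = c * κ m) :
    K * E = c • (E * K) :=
  linearMap_ext_T fun m => by simp [hK, hE, hc, smul_smul, mul_comm, mul_left_comm]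

theorem diagonal_mul_comm (hK : ∀ m, K (T m) = κ m • T m) (hK' : ∀ m, K' (T m) = κ' m • T m) :
    K * K' = K' * K :=
  linearMap_ext_T fun m => by simp [hK, hK', smul_smul, mul_comm]

theorem diagonal_mul_eq_smul_one (hK : ∀ m, K (T m) = κ m • T m)
    (hK' : ∀ m, K' (T m) = κ' m • T m) (c : R) (hc : ∀ m, κ m * κ' m = c) :
    K * K' = c • 1 :=
  linearMap_ext_T fun m => by simp [hK, hK', smul_smul, mul_comm, hc]

theorem shift_commutator_eq_smul_sub (hE : ∀ m, E (T m) = e m • T (m - 1))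
    (hF : ∀ m, F (T m) = f m • T (m + 1)) (hK : ∀ m, K (T m) = κ m • T m)
    (hK' : ∀ m, K' (T m) = κ' m • T m) (c : R)
    (hc : ∀ m, e (m + 1) * f m - f (m - 1) * e m = c * (κ m - κ' m)) :
    E * F - F * E = c • (K - K') :=
  linearMap_ext_T fun m => by simp [hK, hK', hE, hF, smul_smul, ← sub_smul, ← hc, mul_comm]

end LaurentPolynomial

open LaurentPolynomial

theorem statement11_general {k : Type*} [Field k] (q T₁ T₂ i : k)
    (hq : q ≠ 0) (hi : i ^ 2 = -1)
    (Dp Dm : Module.End k (LaurentPolynomial k))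
    (hDp : ∀ m : ℤ, Dp (LaurentPolynomial.T m) = q ^ (2 * m) • LaurentPolynomial.T m)
    (hDm : ∀ m : ℤ, Dm (LaurentPolynomial.T m) = q ^ (-(2 * m)) • LaurentPolynomial.T m) :
    let E : Module.End k (LaurentPolynomial k) :=
      (i * T₁) • (LinearMap.mulLeft k (LaurentPolynomial.T (-1)) * (1 + (q * T₂) • Dm))
    let F : Module.End k (LaurentPolynomial k) :=
      (i * T₁) • (LinearMap.mulLeft k (LaurentPolynomial.T 1) * (1 + (q * T₂) • Dp))
    let K : Module.End k (LaurentPolynomial k) := (T₁ ^ 2 * T₂) • Dm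
    let K' : Module.End k (LaurentPolynomial k) := (T₁ ^ 2 * T₂) • Dp
    K * E = q ^ 2 • (E * K) ∧
    K * F = q ^ (-2 : ℤ) • (F * K) ∧
    K' * E = q ^ (-2 : ℤ) • (E * K') ∧
    K' * F = q ^ 2 • (F * K') ∧
    K * K' = K' * K ∧
    K * K' = (T₁ ^ 4 * T₂ ^ 2) • (1 : Module.End k (LaurentPolynomial k)) ∧
    E * F - F * E = (q - q⁻¹) • (K - K') ∧
    (K * K' = 1 ↔ (T₁ ^ 2 * T₂ = 1 ∨ T₁ ^ 2 * T₂ = -1)) := by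
  intro E F K K'
  have hE (m : ℤ) : E (T m) = (i * T₁ * (1 + q * T₂ * q ^ (-(2 * m)))) • T (m - 1) := by
    simp only [E, LinearMap.smul_apply, mulLeft_T_mul_one_add_smul_apply_T hDm, smul_smul,
      ← sub_eq_add_neg]
  have hF (m : ℤ) : F (T m) = (i * T₁ * (1 + q * T₂ * q ^ (2 * m))) • T (m + 1) := by
    simp only [F, LinearMap.smul_apply, mulLeft_T_mul_one_add_smul_apply_T hDp, smul_smul]
  have hK (m : ℤ) : K (T m) = (T₁ ^ 2 * T₂ * q ^ (-(2 * m))) • T m := by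
    simp only [K, LinearMap.smul_apply, hDm, smul_smul]
  have hK' (m : ℤ) : K' (T m) = (T₁ ^ 2 * T₂ * q ^ (2 * m)) • T m := by
    simp only [K', LinearMap.smul_apply, hDp, smul_smul]
  have hKK' : K * K' = (T₁ ^ 4 * T₂ ^ 2) • 1 :=
    diagonal_mul_eq_smul_one hK hK' _ fun m => by
      rw [zpow_neg]
      field_simp [zpow_ne_zero m hq]
  refine ⟨diagonal_mul_shift_eq_smul hK (d := -1) hE _ fun m => ?_,
    diagonal_mul_shift_eq_smul hK hF _ fun m => ?_,
    diagonal_mul_shift_eq_smul hK' (d := -1) hE _ fun m => ?_,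
    diagonal_mul_shift_eq_smul hK' hF _ fun m => ?_,
    diagonal_mul_comm hK hK', hKK', shift_commutator_eq_smul_sub hE hF hK hK' _ fun m => ?_, ?_⟩
  rotate_right
  · rw [hKK', ← Algebra.algebraMap_eq_smul_one, FaithfulSMul.algebraMap_eq_one_iff,
      ← sq_eq_one_iff]
    ring_nf
  all_goals
    simp only [mul_add, mul_sub, mul_neg, mul_one, neg_add, neg_neg, zpow_add₀ hq, zpow_sub₀ hq,
      zpow_neg, zpow_ofNat]
    field_simp
  linear_combination (T₁ ^ 2 * T₂ * (q ^ 2 - 1) * ((q ^ (2 * m)) ^ 2 - 1)) * hi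

/-- the operators `E = i T₁ x⁻¹ (1 + q T₂ D₋)`, `F = i T₁ x (1 + q T₂ D₊)`,
`K = T₁² T₂ D₋`, `K' = T₁² T₂ D₊` on the Laurent polynomials `L = k[x, x⁻¹]` satisfy the
defining relations of the Drinfeld double 𝔇 of the quantum Borel of sl₂:
`KE = q²EK`, `KF = q⁻²FK`, `K'E = q⁻²EK'`, `K'F = q²FK'`, `KK' = K'K = T₁⁴T₂²·Id`,
`EF − FE = (q − q⁻¹)(K − K')`; and `KK' = Id` iff `T₁²T₂ = ±1`. -/
theorem statement11 {k : Type*} [Field k] (q T₁ T₂ i : k)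
    (hq : q ≠ 0) (hT₁ : T₁ ≠ 0) (hT₂ : T₂ ≠ 0) (hi : i ^ 2 = -1)
    (Dp Dm : Module.End k (LaurentPolynomial k))
    (hDp : ∀ m : ℤ, Dp (LaurentPolynomial.T m) = q ^ (2 * m) • LaurentPolynomial.T m)
    (hDm : ∀ m : ℤ, Dm (LaurentPolynomial.T m) = q ^ (-(2 * m)) • LaurentPolynomial.T m) :
    let E : Module.End k (LaurentPolynomial k) :=
      (i * T₁) • (LinearMap.mulLeft k (LaurentPolynomial.T (-1)) * (1 + (q * T₂) • Dm))
    let F : Module.End k (LaurentPolynomial k) :=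
      (i * T₁) • (LinearMap.mulLeft k (LaurentPolynomial.T 1) * (1 + (q * T₂) • Dp))
    let K : Module.End k (LaurentPolynomial k) := (T₁ ^ 2 * T₂) • Dm
    let K' : Module.End k (LaurentPolynomial k) := (T₁ ^ 2 * T₂) • Dp
    K * E = q ^ 2 • (E * K) ∧
    K * F = q ^ (-2 : ℤ) • (F * K) ∧
    K' * E = q ^ (-2 : ℤ) • (E * K') ∧
    K' * F = q ^ 2 • (F * K') ∧
    K * K' = K' * K ∧
    K * K' = (T₁ ^ 4 * T₂ ^ 2) • (1 : Module.End k (LaurentPolynomial k)) ∧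
    E * F - F * E = (q - q⁻¹) • (K - K') ∧
    (K * K' = 1 ↔ (T₁ ^ 2 * T₂ = 1 ∨ T₁ ^ 2 * T₂ = -1)) :=
  statement11_general q T₁ T₂ i hq hi Dp Dm hDp hDm
end
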